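/- Let p ≥ q ≥ 1 and n ≥ 1, and let B be a real p×q matrix with nonnegative entries such that every row of B and every column of B contains a positive entry. Then the matrices L(C) ⊕ I_{(n-1)(p-q)} and L(D) are cospectral, i.e., these two (np+q)-square matrices have the same characteristic polynomial (after transporting along a bijection of their index types). -/

import Mathlib

open Matrix

/-- The matrix `C` of Construction I: indexed by `Fin p ⊕ (Fin n × Fin q)`,
first block row `[0, B, B, …, B]`, first block column its transpose, other blocks zero. -/
def matC (p q n : ℕ) (B : Matrix (Fin p) (Fin q) ℝ) :
    Matrix (Fin p ⊕ Fin n × Fin q) (Fin p ⊕ Fin n × Fin q) ℝ :=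
  Matrix.of fun a b =>
    match a, b with
    | Sum.inl i, Sum.inr (_, j) => B i j
    | Sum.inr (_, j), Sum.inl i => B i j
    | _, _ => 0

/-- The matrix `D` of Construction I: indexed by `Fin q ⊕ (Fin n × Fin p)`,
first block row `[0, Bᵀ, Bᵀ, …, Bᵀ]`, first block column its transpose, other blocks zero. -/
def matD (p q n : ℕ) (B : Matrix (Fin p) (Fin q) ℝ) :
    Matrix (Fin q ⊕ Fin n × Fin p) (Fin q ⊕ Fin n × Fin p) ℝ :=
  Matrix.of fun a b =>
    match a, b with
    | Sum.inl j, Sum.inr (_, i) => B i j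
    | Sum.inr (_, i), Sum.inl j => B i j
    | _, _ => 0

/-- The normalized Laplacian `L(M) = I − Δ^{-1/2} M Δ^{-1/2}` of a matrix `M`, where
`Δ^{-1/2}` is the diagonal matrix of reciprocal square roots of the row sums of `M`. -/
noncomputable def normLap {ι : Type} [Fintype ι] [DecidableEq ι] (M : Matrix ι ι ℝ) :
    Matrix ι ι ℝ :=
  1 - Matrix.diagonal (fun i => (Real.sqrt (∑ j, M i j))⁻¹) * M *
      Matrix.diagonal (fun i => (Real.sqrt (∑ j, M i j))⁻¹)

/-! `C` and `D` are bipartite, `[[0, F], [Fᵀ, 0]]`, so their normalized Laplacians are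
`[[1, -N], [-Nᵀ, 1]]` with `N` the biadjacency block normalized by its row and column sums.
With `T = X - 1`, a block-triangular factor turns the characteristic determinant into
`T ^ |rows| * χ = T ^ |cols| * χ_{N Nᵀ}(T²)`, valid over `ℝ[X]` without inverting `T`.
Repeating the columns of `B` `n` times scales `N` by `1/√n` and `N Nᵀ` back by `n`, so `L(C)` is
governed by `Â Âᵀ` and `L(D)` by `Âᵀ Â`, where `Â` is the normalized `B`. By Sylvester,
`X ^ p * χ_{Âᵀ Â} = X ^ q * χ_{Â Âᵀ}`, and cancelling powers of `T` leaves the factor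
`T ^ ((n - 1) * (p - q))`, the characteristic polynomial of the identity block. -/

open Polynomial

namespace Matrix

section CharpolyBlocks

variable {α β R : Type*} [Fintype α] [Fintype β] [DecidableEq α] [DecidableEq β] [CommRing R]

theorem pow_card_mul_det_fromBlocks_scalar (y : R) (G : Matrix α β R) (H : Matrix β α R) :
    y ^ Fintype.card α * (fromBlocks (scalar α y) G H (scalar β y)).det =
      y ^ Fintype.card β * (scalar α (y ^ 2) - G * H).det := by
  -- Clears the lower-left block without dividing by `y`.
  have hmul : fromBlocks (scalar α y) G H (scalar β y) * fromBlocks (scalar α y) 0 (-H) 1 =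
      fromBlocks (scalar α (y ^ 2) - G * H) G 0 (scalar β y) := by
    simp only [fromBlocks_multiply, scalar_apply, ← smul_one_eq_diagonal]
    simp [sq, sub_eq_add_neg, smul_smul]
  have hdet := congrArg det hmul
  simp only [det_mul, det_fromBlocks_zero₁₂, det_fromBlocks_zero₂₁, scalar_apply, det_diagonal,
    Finset.prod_const, Finset.card_univ, det_one, mul_one] at hdet
  simpa only [scalar_apply, mul_comm] using hdet

theorem det_scalar_sub_map_C (M : Matrix α α R) (p : R[X]) :
    (scalar α p - M.map C).det = M.charpoly.comp p := by
  rw [charpoly, ← coe_compRingHom_apply, RingHom.map_det]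
  congr 1
  ext i j
  by_cases h : i = j <;> simp [h]

theorem charmatrix_scalar (a : R) : charmatrix (scalar α a) = scalar α (X - C a) := by
  ext i j
  by_cases h : i = j <;> simp [h]

theorem pow_card_mul_charpoly_fromBlocks_scalar (a : R) (G : Matrix α β R) (H : Matrix β α R) :
    (X - C a) ^ Fintype.card α * (fromBlocks (scalar α a) G H (scalar β a)).charpoly =
      (X - C a) ^ Fintype.card β * (G * H).charpoly.comp ((X - C a) ^ 2) := by
  rw [charpoly, charmatrix_fromBlocks, charmatrix_scalar, charmatrix_scalar,
    pow_card_mul_det_fromBlocks_scalar, Matrix.neg_mul, Matrix.mul_neg, neg_neg,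
    ← Matrix.map_mul, det_scalar_sub_map_C]

end CharpolyBlocks

section Bipartite

variable {α β : Type}

def bipartite (F : Matrix α β ℝ) : Matrix (α ⊕ β) (α ⊕ β) ℝ :=
  fromBlocks 0 F Fᵀ 0

noncomputable def normBiadj [Fintype α] [Fintype β] (F : Matrix α β ℝ) : Matrix α β ℝ :=
  of fun a b => (√(∑ b', F a b'))⁻¹ * F a b * (√(∑ a', F a' b))⁻¹

def repeatCols {R : Type*} (n : ℕ) (F : Matrix α β R) : Matrix α (Fin n × β) R :=
  of fun a kb => F a kb.2

theorem normLap_apply {ι : Type} [Fintype ι] [DecidableEq ι] (M : Matrix ι ι ℝ) (a b : ι) :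
    normLap M a b = (1 : Matrix ι ι ℝ) a b - (√(∑ c, M a c))⁻¹ * M a b * (√(∑ c, M b c))⁻¹ := by
  simp [normLap, mul_diagonal, diagonal_mul]

theorem normLap_bipartite [Fintype α] [Fintype β] [DecidableEq α] [DecidableEq β]
    (F : Matrix α β ℝ) :
    normLap (bipartite F) = fromBlocks 1 (-normBiadj F) (-(normBiadj F)ᵀ) 1 := by
  ext (a | b) (a' | b') <;>
    simp [normLap_apply, bipartite, normBiadj, one_apply, Fintype.sum_sum_type]
  ring

theorem normBiadj_transpose [Fintype α] [Fintype β] (F : Matrix α β ℝ) :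
    normBiadj Fᵀ = (normBiadj F)ᵀ := by
  ext b a
  simp only [normBiadj, transpose_apply, of_apply]
  ring

theorem normBiadj_repeatCols [Fintype α] [Fintype β] (n : ℕ) (F : Matrix α β ℝ) :
    normBiadj (repeatCols n F) = (√n)⁻¹ • repeatCols n (normBiadj F) := by
  ext a ⟨k, b⟩
  simp [normBiadj, repeatCols, Fintype.sum_prod_type, Real.sqrt_mul (Nat.cast_nonneg n)]
  ring

theorem repeatCols_mul_transpose {R : Type*} [CommSemiring R] [Fintype β] (n : ℕ)
    (G : Matrix α β R) :
    repeatCols n G * (repeatCols n G)ᵀ = (n : R) • (G * Gᵀ) := by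
  ext a a'
  simp [repeatCols, mul_apply, Fintype.sum_prod_type]

theorem normBiadj_repeatCols_mul_transpose [Fintype α] [Fintype β] {n : ℕ} (hn : n ≠ 0)
    (F : Matrix α β ℝ) :
    normBiadj (repeatCols n F) * (normBiadj (repeatCols n F))ᵀ =
      normBiadj F * (normBiadj F)ᵀ := by
  have hsqrt : (√n)⁻¹ * (√n)⁻¹ * n = (1 : ℝ) := by
    rw [← mul_inv, Real.mul_self_sqrt (Nat.cast_nonneg n),
      inv_mul_cancel₀ (Nat.cast_ne_zero.mpr hn)]
  rw [normBiadj_repeatCols, transpose_smul, Matrix.smul_mul, Matrix.mul_smul,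
    repeatCols_mul_transpose, smul_smul, smul_smul, hsqrt, one_smul]

theorem pow_card_mul_charpoly_normLap_bipartite_repeatCols [Fintype α] [Fintype β]
    [DecidableEq α] [DecidableEq β] {n : ℕ} (hn : n ≠ 0) (F : Matrix α β ℝ) :
    (X - 1) ^ Fintype.card α * (normLap (bipartite (repeatCols n F))).charpoly =
      (X - 1) ^ (n * Fintype.card β) *
        (normBiadj F * (normBiadj F)ᵀ).charpoly.comp ((X - 1) ^ 2) := by
  have h := pow_card_mul_charpoly_fromBlocks_scalar (1 : ℝ) (-normBiadj (repeatCols n F))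
    (-(normBiadj (repeatCols n F))ᵀ)
  rw [map_one, map_one, map_one, Matrix.neg_mul, Matrix.mul_neg, neg_neg,
    normBiadj_repeatCols_mul_transpose hn] at h
  simpa [normLap_bipartite] using h

end Bipartite

end Matrix

theorem matC_eq_bipartite (p q n : ℕ) (B : Matrix (Fin p) (Fin q) ℝ) :
    matC p q n B = bipartite (repeatCols n B) := by
  ext (i | ⟨k, j⟩) (i' | ⟨k', j'⟩) <;> rfl

theorem matD_eq_bipartite (p q n : ℕ) (B : Matrix (Fin p) (Fin q) ℝ) :
    matD p q n B = bipartite (repeatCols n Bᵀ) := by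
  ext (j | ⟨k, i⟩) (j' | ⟨k', i'⟩) <;> rfl

theorem charpoly_normLap_matD {p q n : ℕ} (hpq : q ≤ p) (hn : 1 ≤ n)
    (B : Matrix (Fin p) (Fin q) ℝ) :
    (normLap (matD p q n B)).charpoly =
      (normLap (matC p q n B)).charpoly * (X - 1) ^ ((n - 1) * (p - q)) := by
  set A := normBiadj B
  have hC := pow_card_mul_charpoly_normLap_bipartite_repeatCols (by omega : n ≠ 0) B
  have hD := pow_card_mul_charpoly_normLap_bipartite_repeatCols (by omega : n ≠ 0) Bᵀ
  rw [← matC_eq_bipartite, Fintype.card_fin, Fintype.card_fin] at hC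
  rw [← matD_eq_bipartite, Fintype.card_fin, Fintype.card_fin, normBiadj_transpose,
    transpose_transpose] at hD
  have hsylvester := congrArg (·.comp ((X - 1 : ℝ[X]) ^ 2)) (charpoly_mul_comm' Aᵀ A)
  simp only [mul_comp, X_pow_comp, ← pow_mul, Fintype.card_fin] at hsylvester
  obtain ⟨m, rfl⟩ := Nat.exists_eq_add_of_le' hn
  obtain ⟨d, rfl⟩ := Nat.exists_eq_add_of_le hpq
  rw [Nat.add_sub_cancel, Nat.add_sub_cancel_left]
  have hX : (X - 1 : ℝ[X]) ≠ 0 := by simpa using X_sub_C_ne_zero (1 : ℝ)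
  refine mul_left_cancel₀ (pow_ne_zero (q + 2 * (q + d)) hX) ?_
  linear_combination (X - 1) ^ (2 * (q + d)) * hD + (X - 1) ^ ((m + 1) * (q + d)) * hsylvester -
    (X - 1) ^ (q + (q + d) + m * d) * hC

theorem construction_I_normLap_cospectral (p q n : ℕ) (hpq : q ≤ p) (hn : 1 ≤ n)
    (B : Matrix (Fin p) (Fin q) ℝ) :
    ∃ e : (Fin q ⊕ Fin n × Fin p) ≃ ((Fin p ⊕ Fin n × Fin q) ⊕ Fin ((n - 1) * (p - q))),
      (normLap (matD p q n B)).charpoly =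
        ((Matrix.fromBlocks (normLap (matC p q n B)) 0 0
            (1 : Matrix (Fin ((n - 1) * (p - q))) (Fin ((n - 1) * (p - q))) ℝ)).submatrix e
          e).charpoly := by
  have hcard : Fintype.card (Fin q ⊕ Fin n × Fin p) =
      Fintype.card ((Fin p ⊕ Fin n × Fin q) ⊕ Fin ((n - 1) * (p - q))) := by
    obtain ⟨m, rfl⟩ := Nat.exists_eq_add_of_le' hn
    obtain ⟨d, rfl⟩ := Nat.exists_eq_add_of_le hpq
    simp only [Fintype.card_sum, Fintype.card_prod, Fintype.card_fin, Nat.add_sub_cancel,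
      Nat.add_sub_cancel_left]
    ring
  refine ⟨(Fintype.equivOfCardEq hcard.symm).symm, ?_⟩
  rw [← reindex_apply, charpoly_reindex, charpoly_fromBlocks_zero₁₂, charpoly_one,
    Fintype.card_fin, charpoly_normLap_matD hpq hn]
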